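/- If y : ℝ → ℝ is bounded below and the greatest convex minorants T(y) (over ℝ) and T_c(y) (over [−c,c]) have no point of touch on a subinterval I ⊆ [−c,c] (i.e., T(y)(t) < T_c(y)(t) for all t ∈ I), then T(y) is affine on I. -/

import Mathlib

open Set

/-!
Where `T(y) < T_c(y)` on a compact piece `[p, r]` of `I` inside `(-c, c)`, continuity gives a
uniform gap `δ > 0`, and since `T_c(y) ≤ y` there, `T(y) + δ ≤ y` on `[p, r]`. If `T(y)` were
strictly below its secant over `[p, r]`, the maximum of `T(y)` and that secant, lowered just enough,
would be a convex minorant of `y` exceeding `T(y)` somewhere, contradicting maximality. So `T(y)` is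
affine on every such piece; the pieces glue, and continuity of `T(y)` reaches the endpoints of `I`.
-/

noncomputable def gcm (O : Set ℝ) (x : ℝ → ℝ) (t : ℝ) : ℝ :=
  sSup {v : ℝ | ∃ z : ℝ → ℝ, ConvexOn ℝ O z ∧ (∀ s ∈ O, z s ≤ x s) ∧ v = z t}

def IsAffineOn (f : ℝ → ℝ) (S : Set ℝ) : Prop :=
  ∃ a b : ℝ, ∀ t ∈ S, f t = a * t + b

theorem isAffineOn_of_forall_Icc {f : ℝ → ℝ} {S : Set ℝ}
    (h : ∀ p ∈ S, ∀ r ∈ S, p < r → IsAffineOn f (Icc p r)) : IsAffineOn f S := by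
  by_cases hS : ∃ u ∈ S, ∃ v ∈ S, u < v
  · obtain ⟨u, hu, v, hv, huv⟩ := hS
    obtain ⟨a, b, hab⟩ := h u hu v hv huv
    refine ⟨a, b, fun t ht => ?_⟩
    -- the affine function on `[min u t, max v t]` agrees with `a * s + b` at `u` and `v`
    obtain ⟨a', b', hab'⟩ := h (min u t) (min_rec' S hu ht) (max v t) (max_rec' S hv ht)
      ((min_le_left u t).trans_lt (huv.trans_le (le_max_left v t)))
    have hu' : a * u + b = a' * u + b' :=
      (hab u ⟨le_rfl, huv.le⟩).symm.trans
        (hab' u ⟨min_le_left u t, huv.le.trans (le_max_left v t)⟩)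
    have hv' : a * v + b = a' * v + b' :=
      (hab v ⟨huv.le, le_rfl⟩).symm.trans
        (hab' v ⟨(min_le_left u t).trans huv.le, le_max_left v t⟩)
    have ha : a' = a := by
      have : (a' - a) * (v - u) = 0 := by linear_combination hu' - hv'
      linarith [(mul_eq_zero.1 this).resolve_right (sub_ne_zero.2 huv.ne')]
    rw [hab' t ⟨min_le_right u t, le_max_right v t⟩]
    subst ha
    linarith
  · push Not at hS
    rcases S.eq_empty_or_nonempty with rfl | ⟨t₀, ht₀⟩
    · exact ⟨0, 0, fun _ h => h.elim⟩
    · refine ⟨0, f t₀, fun t ht => ?_⟩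
      rw [le_antisymm (hS t ht t₀ ht₀) (hS t₀ ht₀ t ht)]
      ring

theorem IsAffineOn.closure {f : ℝ → ℝ} {S : Set ℝ} (h : IsAffineOn f S) (hf : Continuous f) :
    IsAffineOn f (closure S) := by
  obtain ⟨a, b, hab⟩ := h
  exact ⟨a, b, Set.EqOn.closure hab hf (by fun_prop)⟩

theorem ConvexOn.le_secant {S : Set ℝ} {f : ℝ → ℝ} (hf : ConvexOn ℝ S f) {p r s : ℝ}
    (hp : p ∈ S) (hr : r ∈ S) (hs : s ∈ Icc p r) : f s ≤ f p + slope f p r * (s - p) := by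
  obtain rfl | hps := hs.1.eq_or_lt
  · simp
  have hslope : slope f p s ≤ slope f p r :=
    hf.slope_mono hp ⟨hf.1.ordConnected.out hp hr hs, hps.ne'⟩
      ⟨hr, (hps.trans_le hs.2).ne'⟩ hs.2
  have := sub_smul_slope_vadd f p s
  simp only [smul_eq_mul, vadd_eq_add] at this
  nlinarith

theorem ConvexOn.secant_le {S : Set ℝ} {f : ℝ → ℝ} (hf : ConvexOn ℝ S f) {p r s : ℝ}
    (hp : p ∈ S) (hr : r ∈ S) (hs : s ∈ S) (hpr : p < r) (hs' : s ∉ Ioo p r) :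
    f p + slope f p r * (s - p) ≤ f s := by
  have hfs := sub_smul_slope_vadd f p s
  simp only [smul_eq_mul, vadd_eq_add] at hfs
  have hmono := hf.slope_mono hp
  rcases lt_trichotomy s p with hsp | rfl | hps
  · have : slope f p s ≤ slope f p r := hmono ⟨hs, hsp.ne⟩ ⟨hr, hpr.ne'⟩ (hsp.trans hpr).le
    nlinarith
  · simp
  · have hrs : r ≤ s := not_lt.1 fun hsr => hs' ⟨hps, hsr⟩
    have : slope f p r ≤ slope f p s := hmono ⟨hr, hpr.ne'⟩ ⟨hs, hps.ne'⟩ hrs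
    nlinarith

section gcm

variable {O : Set ℝ} {y z : ℝ → ℝ} {t : ℝ}

theorem le_gcm (hz : ConvexOn ℝ O z) (hzy : ∀ s ∈ O, z s ≤ y s) (ht : t ∈ O) :
    z t ≤ gcm O y t :=
  le_csSup ⟨y t, by rintro _ ⟨w, -, hwy, rfl⟩; exact hwy t ht⟩ ⟨z, hz, hzy, rfl⟩

theorem gcm_le_of_forall (hbdd : BddBelow (range y)) (hO : Convex ℝ O) {B : ℝ}
    (h : ∀ z, ConvexOn ℝ O z → (∀ s ∈ O, z s ≤ y s) → z t ≤ B) : gcm O y t ≤ B := by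
  obtain ⟨m, hm⟩ := hbdd
  refine csSup_le ⟨m, fun _ => m, convexOn_const m hO, fun s _ => hm ⟨s, rfl⟩, rfl⟩ ?_
  rintro _ ⟨z, hz, hzy, rfl⟩
  exact h z hz hzy

theorem gcm_le (hbdd : BddBelow (range y)) (hO : Convex ℝ O) (ht : t ∈ O) : gcm O y t ≤ y t :=
  gcm_le_of_forall hbdd hO fun _ _ hzy => hzy t ht

theorem convexOn_gcm (hbdd : BddBelow (range y)) (hO : Convex ℝ O) : ConvexOn ℝ O (gcm O y) := by
  refine ⟨hO, fun u hu v hv a b ha hb hab => gcm_le_of_forall hbdd hO fun z hz hzy => ?_⟩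
  calc z (a • u + b • v) ≤ a • z u + b • z v := hz.2 hu hv ha hb hab
    _ ≤ a • gcm O y u + b • gcm O y v := by
      gcongr
      exacts [le_gcm hz hzy hu, le_gcm hz hzy hv]

theorem continuous_gcm_univ (hbdd : BddBelow (range y)) : Continuous (gcm univ y) := by
  simpa [continuousOn_univ] using (convexOn_gcm hbdd convex_univ).continuousOn_interior

theorem gcm_univ_eq_secant (hbdd : BddBelow (range y)) {p r δ : ℝ} (hpr : p < r) (hδ : 0 < δ)
    (hgap : ∀ s ∈ Icc p r, gcm univ y s + δ ≤ y s) :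
    ∀ s ∈ Icc p r, gcm univ y s = gcm univ y p + slope (gcm univ y) p r * (s - p) := by
  set f := gcm univ y
  have hf : ConvexOn ℝ univ f := convexOn_gcm hbdd convex_univ
  set L : ℝ → ℝ := fun s => f p + slope f p r * (s - p) with hL
  obtain ⟨x₀, -, hmax⟩ := isCompact_Icc.exists_isMaxOn (nonempty_Icc.2 hpr.le)
    ((by fun_prop : Continuous L).sub (continuous_gcm_univ hbdd)).continuousOn
  suffices hΓ : L x₀ - f x₀ ≤ 0 from fun s hs =>
    le_antisymm (hf.le_secant (mem_univ p) (mem_univ r) hs)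
      (by linarith [show L s - f s ≤ L x₀ - f x₀ from hmax hs])
  by_contra! hΓ
  -- lower the secant by `e` just enough that it stays below `y` on `[p, r]`
  set e := max 0 (L x₀ - f x₀ - δ)
  have hLe : ∀ s, L s - e ≤ y s := by
    intro s
    by_cases hs : s ∈ Ioo p r
    · have hmax_s : L s - f s ≤ L x₀ - f x₀ := hmax (Ioo_subset_Icc_self hs)
      linarith [hgap s (Ioo_subset_Icc_self hs), le_max_right 0 (L x₀ - f x₀ - δ)]
    · linarith [hf.secant_le (mem_univ p) (mem_univ r) (mem_univ s) hpr hs,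
        gcm_le hbdd convex_univ (mem_univ s), le_max_left 0 (L x₀ - f x₀ - δ)]
  have hLconv : ConvexOn ℝ univ fun s => L s - e :=
    ⟨convex_univ, fun u _ v _ a b _ _ hab => le_of_eq <| by
      simp only [hL, smul_eq_mul]; linear_combination (-(f p - slope f p r * p) + e) * hab⟩
  have hraise := le_gcm (hf.sup hLconv)
    (fun s _ => sup_le (gcm_le hbdd convex_univ (mem_univ s)) (hLe s)) (mem_univ x₀)
  have : e < L x₀ - f x₀ := max_lt hΓ (by linarith)
  linarith [le_sup_right.trans hraise]

end gcm

theorem gcm_affine_of_no_touch_general (y : ℝ → ℝ) (hbdd : BddBelow (Set.range y))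
    (c : ℝ) (I : Set ℝ) (hI : Convex ℝ I) (hIc : I ⊆ Icc (-c) c)
    (hnotouch : ∀ t ∈ I, gcm Set.univ y t < gcm (Icc (-c) c) y t) :
    ∃ a b : ℝ, ∀ t ∈ I, gcm Set.univ y t = a * t + b := by
  have hfc := continuous_gcm_univ hbdd
  have hgc : ContinuousOn (gcm (Icc (-c) c) y) (Ioo (-c) c) := by
    simpa using (convexOn_gcm hbdd (convex_Icc (-c) c)).continuousOn_interior
  refine isAffineOn_of_forall_Icc fun p hp r hr hpr => ?_
  -- `T_c(y)` may jump at `±c`, so the gap is bounded away from `0` only on `[p', r'] ⊆ (p, r)`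
  rw [← closure_Ioo hpr.ne]
  refine (isAffineOn_of_forall_Icc fun p' hp' r' hr' hpr' => ?_).closure hfc
  have hsub : Icc p' r' ⊆ I ∩ Ioo (-c) c := fun s hs =>
    have hs' : s ∈ Ioo p r := ⟨hp'.1.trans_le hs.1, hs.2.trans_lt hr'.2⟩
    ⟨hI.ordConnected.out hp hr (Ioo_subset_Icc_self hs'),
      (hIc hp).1.trans_lt hs'.1, hs'.2.trans_le (hIc hr).2⟩
  obtain ⟨δ, hδ, hgap⟩ := isCompact_Icc.exists_forall_le'
    ((hgc.mono fun s hs => (hsub hs).2).sub hfc.continuousOn)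
    fun s hs => sub_pos.2 (hnotouch s (hsub hs).1)
  have hsecant := gcm_univ_eq_secant hbdd hpr' hδ fun s hs => by
    linarith [show δ ≤ _ - _ from hgap s hs,
      gcm_le hbdd (convex_Icc _ _) (Ioo_subset_Icc_self (hsub hs).2)]
  exact ⟨slope (gcm univ y) p' r', gcm univ y p' - slope (gcm univ y) p' r' * p',
    fun s hs => (hsecant s hs).trans (by ring)⟩

/-- If the greatest convex minorants over ℝ and over [-c,c] have no point of touch on a
subinterval I of [-c,c], then the global one is affine on I. -/
theorem gcm_affine_of_no_touch (y : ℝ → ℝ) (hbdd : BddBelow (Set.range y))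
    (c : ℝ) (hc : 0 < c) (I : Set ℝ) (hI : Convex ℝ I) (hIc : I ⊆ Icc (-c) c)
    (hnotouch : ∀ t ∈ I, gcm Set.univ y t < gcm (Icc (-c) c) y t) :
    ∃ a b : ℝ, ∀ t ∈ I, gcm Set.univ y t = a * t + b :=
  gcm_affine_of_no_touch_general y hbdd c I hI hIc hnotouch
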